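/- arXiv:1906.04532 — 4 statements merged into one kernel-verified Lean document; each statement's English description precedes it below -/
import Mathlib

section
/- Let B, C, X, Y, Z be pairwise disjoint finite sets of integers. Then Δ(X∪Z∪C)·Δ(B∪Y∪Z)·Δ(B,X)·Δ(Y,C) = Δ(B∪X∪Z)·Δ(Y∪Z∪C)·Δ(X,C)·Δ(B,Y). In particular, the ratio Δ(X∪Z∪C)·Δ(B∪Y∪Z) / (Δ(B∪X∪Z)·Δ(Y∪Z∪C)) equals Δ(X,C)·Δ(B,Y)/(Δ(B,X)·Δ(Y,C)) and is independent of the set Z. -/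
/-- `Δ(S) = ∏_{s₁,s₂ ∈ S, s₁ < s₂} (s₂ - s₁)`. -/
def Dset (S : Finset ℤ) : ℤ :=
  ∏ x ∈ S, ∏ y ∈ S.filter (fun y => x < y), (y - x)

/-- `Δ(S,T) = ∏_{s ∈ S, t ∈ T} |t - s|`. -/
def Dpair (S T : Finset ℤ) : ℤ :=
  ∏ s ∈ S, ∏ t ∈ T, |t - s|

lemma cross_eq {S T : Finset ℤ} (h : Disjoint S T) :
    (∏ x ∈ S, ∏ y ∈ T.filter (fun y => x < y), (y - x)) *
      (∏ x ∈ T, ∏ y ∈ S.filter (fun y => x < y), (y - x)) = Dpair S T := by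
  unfold Dpair
  have h1 : ∀ s ∈ S, ∏ t ∈ T, |t - s| =
      (∏ t ∈ T.filter (fun t => s < t), (t - s)) *
        ∏ t ∈ T.filter (fun t => ¬ s < t), (s - t) := by
    intro s hs
    rw [← Finset.prod_filter_mul_prod_filter_not T (fun t => s < t)]
    congr 1
    · exact Finset.prod_congr rfl fun t ht => by
        rw [Finset.mem_filter] at ht; exact abs_of_pos (by omega)
    · refine Finset.prod_congr rfl fun t ht => ?_
      rw [Finset.mem_filter] at ht
      have hne : t ≠ s := by
        intro e; exact (Finset.disjoint_left.mp h hs) (e ▸ ht.1)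
      rw [abs_of_neg (by omega)]; ring
  rw [Finset.prod_congr rfl h1, Finset.prod_mul_distrib]
  congr 1
  have h2 : ∀ s ∈ S, ∏ t ∈ T.filter (fun t => ¬ s < t), (s - t) =
      ∏ t ∈ T, if ¬ s < t then s - t else 1 := fun s _ => Finset.prod_filter _ _
  rw [Finset.prod_congr rfl h2, Finset.prod_comm]
  refine Finset.prod_congr rfl fun t ht => ?_
  rw [← Finset.prod_filter]
  refine Finset.prod_congr (Finset.filter_congr fun s hs => ?_) fun s hs => rfl
  have hne : t ≠ s := by
    intro e; exact (Finset.disjoint_left.mp h hs) (e ▸ ht)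
  constructor <;> omega

lemma Dset_union {S T : Finset ℤ} (h : Disjoint S T) :
    Dset (S ∪ T) = Dset S * Dset T * Dpair S T := by
  unfold Dset
  rw [Finset.prod_union h]
  have hsplit : ∀ x : ℤ, (S ∪ T).filter (fun y => x < y) =
      S.filter (fun y => x < y) ∪ T.filter (fun y => x < y) := fun x =>
    Finset.filter_union _ _ _
  have hd : ∀ x : ℤ, Disjoint (S.filter (fun y => x < y)) (T.filter (fun y => x < y)) :=
    fun x => (h.mono (Finset.filter_subset _ _) (Finset.filter_subset _ _))
  have e1 : ∀ s ∈ S, ∏ y ∈ (S ∪ T).filter (fun y => s < y), (y - s) =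
      (∏ y ∈ S.filter (fun y => s < y), (y - s)) *
        ∏ y ∈ T.filter (fun y => s < y), (y - s) := by
    intro s _; rw [hsplit, Finset.prod_union (hd s)]
  have e2 : ∀ t ∈ T, ∏ y ∈ (S ∪ T).filter (fun y => t < y), (y - t) =
      (∏ y ∈ T.filter (fun y => t < y), (y - t)) *
        ∏ y ∈ S.filter (fun y => t < y), (y - t) := by
    intro t _; rw [hsplit, Finset.prod_union (hd t), mul_comm]
  rw [Finset.prod_congr rfl e1, Finset.prod_congr rfl e2,
    Finset.prod_mul_distrib, Finset.prod_mul_distrib, ← cross_eq h]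
  ring

lemma Dpair_union_left {S T U : Finset ℤ} (h : Disjoint S T) :
    Dpair (S ∪ T) U = Dpair S U * Dpair T U := by
  unfold Dpair; exact Finset.prod_union h

theorem Z_independence_case_b_lt_l (B C X Y Z : Finset ℤ)
    (hBC : Disjoint B C) (hBX : Disjoint B X) (hBY : Disjoint B Y) (hBZ : Disjoint B Z)
    (hCX : Disjoint C X) (hCY : Disjoint C Y) (hCZ : Disjoint C Z)
    (hXY : Disjoint X Y) (hXZ : Disjoint X Z) (hYZ : Disjoint Y Z) :
    Dset (X ∪ Z ∪ C) * Dset (B ∪ Y ∪ Z) * (Dpair B X * Dpair Y C) =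
      Dset (B ∪ X ∪ Z) * Dset (Y ∪ Z ∪ C) * (Dpair X C * Dpair B Y) := by
  have hXZ_C : Disjoint (X ∪ Z) C := Finset.disjoint_union_left.mpr ⟨hCX.symm, hCZ.symm⟩
  have hBY_Z : Disjoint (B ∪ Y) Z := Finset.disjoint_union_left.mpr ⟨hBZ, hYZ⟩
  have hBX_Z : Disjoint (B ∪ X) Z := Finset.disjoint_union_left.mpr ⟨hBZ, hXZ⟩
  have hYZ_C : Disjoint (Y ∪ Z) C := Finset.disjoint_union_left.mpr ⟨hCY.symm, hCZ.symm⟩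
  rw [Dset_union hXZ_C, Dset_union hXZ, Dset_union hBY_Z, Dset_union hBY,
    Dset_union hBX_Z, Dset_union hBX, Dset_union hYZ_C, Dset_union hYZ,
    Dpair_union_left hXZ, Dpair_union_left hBY, Dpair_union_left hBX,
    Dpair_union_left hYZ]
  ring
end

section
/- Let a, b, c, k, l, m be nonnegative integers with b < l ≤ c and m ≤ b. Set L = a+b+k, B = {−(l−b)+1, ..., −1, 0} and C = {L+1, ..., L+(c−l)}. Let X = {x₁,...,x_{m+k}} and Y = {y₁,...,y_m} be disjoint subsets of [L]. Then (Σ_Z Δ(X∪Z∪C)·Δ(B∪Y∪Z)) · ∏_{i=1}^{m+k}(x_i)_{l−b} · ∏_{j=1}^{m}(a+b+k+1−y_j)_{c−l} = (Σ_Z Δ(B∪X∪Z)·Δ(Y∪Z∪C)) · ∏_{i=1}^{m+k}(a+b+k+1−x_i)_{c−l} · ∏_{j=1}^{m}(y_j)_{l−b}, where both sums range over all subsets Z ⊆ [L]∖(X∪Y) with |Z| = b−m. -/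
/-- The Pochhammer symbol `(a)ₙ = a(a+1)···(a+n-1)`. -/
noncomputable def poch (a : ℤ) (n : ℕ) : ℤ :=
  Polynomial.eval a (ascPochhammer ℤ n)

lemma poch_zero (a : ℤ) : poch a 0 = 1 := by simp [poch]

lemma poch_succ (a : ℤ) (n : ℕ) : poch a (n + 1) = poch a n * (a + n) := by
  unfold poch
  rw [ascPochhammer_succ_right]
  simp

lemma Dset_union_of_lt {S T : Finset ℤ} (h : ∀ s ∈ S, ∀ t ∈ T, s < t) :
    Dset (S ∪ T) = Dset S * Dset T * ∏ s ∈ S, ∏ t ∈ T, (t - s) := by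
  have hd : Disjoint S T := by
    rw [Finset.disjoint_left]
    intro x hxS hxT
    exact lt_irrefl x (h x hxS x hxT)
  unfold Dset
  rw [Finset.prod_union hd]
  have h1 : ∀ x ∈ S, (∏ y ∈ (S ∪ T).filter (fun y => x < y), (y - x))
      = (∏ y ∈ S.filter (fun y => x < y), (y - x)) * ∏ t ∈ T, (t - x) := by
    intro x hx
    rw [Finset.filter_union, Finset.prod_union (Finset.disjoint_filter_filter hd)]
    congr 1
    rw [Finset.filter_true_of_mem (fun t ht => h x hx t ht)]
  have h2 : ∀ x ∈ T, (∏ y ∈ (S ∪ T).filter (fun y => x < y), (y - x))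
      = ∏ y ∈ T.filter (fun y => x < y), (y - x) := by
    intro x hx
    rw [Finset.filter_union]
    have hS : S.filter (fun y => x < y) = ∅ := by
      rw [Finset.filter_eq_empty_iff]
      intro s hs
      exact not_lt.2 (le_of_lt (h s hs x hx))
    rw [hS, Finset.empty_union]
  rw [Finset.prod_congr rfl h1, Finset.prod_congr rfl h2, Finset.prod_mul_distrib]
  ring

lemma prod_Icc_above (s lo : ℤ) (n : ℕ) :
    (∏ t ∈ Finset.Icc lo (lo + n - 1), (t - s)) = poch (lo - s) n := by
  induction n with
  | zero =>
      have : Finset.Icc lo (lo + (0:ℕ) - 1) = ∅ := by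
        apply Finset.Icc_eq_empty
        simp
      rw [this, poch_zero, Finset.prod_empty]
  | succ n ih =>
      have hstep : Finset.Icc lo (lo + (n + 1 : ℕ) - 1)
          = insert (lo + n) (Finset.Icc lo (lo + (n : ℕ) - 1)) := by
        ext x
        simp only [Finset.mem_Icc, Finset.mem_insert]
        push_cast
        omega
      rw [hstep, Finset.prod_insert (by simp), ih, poch_succ]
      ring

lemma prod_Icc_below (s : ℤ) (n : ℕ) :
    (∏ t ∈ Finset.Icc (1 - (n : ℤ)) 0, (s - t)) = poch s n := by
  induction n with
  | zero =>
      have : Finset.Icc (1 - ((0:ℕ) : ℤ)) 0 = ∅ := by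
        apply Finset.Icc_eq_empty; simp
      rw [this, poch_zero, Finset.prod_empty]
  | succ n ih =>
      have hstep : Finset.Icc (1 - ((n + 1 : ℕ) : ℤ)) 0
          = insert (-(n : ℤ)) (Finset.Icc (1 - (n : ℤ)) 0) := by
        ext x
        simp only [Finset.mem_Icc, Finset.mem_insert]
        push_cast
        omega
      rw [hstep, Finset.prod_insert (by simp), ih, poch_succ]
      ring

theorem product_formula_case_b_lt_l (a b c k l m : ℕ)
    (hbl : b < l) (hlc : l ≤ c) (hmb : m ≤ b)
    (L : ℕ) (hL : L = a + b + k)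
    (B C : Finset ℤ)
    (hB : B = Finset.Icc ((b : ℤ) - l + 1) 0)
    (hC : C = Finset.Icc ((L : ℤ) + 1) ((L : ℤ) + c - l))
    (X Y : Finset ℤ)
    (hX : X ⊆ Finset.Icc (1 : ℤ) L) (hY : Y ⊆ Finset.Icc (1 : ℤ) L)
    (hXY : Disjoint X Y)
    (hXcard : X.card = m + k) (hYcard : Y.card = m) :
    (∑ Z ∈ Finset.powersetCard (b - m) (Finset.Icc (1 : ℤ) L \ (X ∪ Y)),
        Dset (X ∪ Z ∪ C) * Dset (B ∪ Y ∪ Z)) *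
      ((∏ x ∈ X, poch x (l - b)) * ∏ y ∈ Y, poch ((a : ℤ) + b + k + 1 - y) (c - l)) =
    (∑ Z ∈ Finset.powersetCard (b - m) (Finset.Icc (1 : ℤ) L \ (X ∪ Y)),
        Dset (B ∪ X ∪ Z) * Dset (Y ∪ Z ∪ C)) *
      ((∏ x ∈ X, poch ((a : ℤ) + b + k + 1 - x) (c - l)) * ∏ y ∈ Y, poch y (l - b)) := by
  -- abbreviations for the two Pochhammer weights
  set A : ℤ → ℤ := fun s => poch ((L : ℤ) + 1 - s) (c - l) with hAdef
  set P : ℤ → ℤ := fun s => poch s (l - b) with hPdef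
  have hLcast : ((a : ℤ) + b + k + 1) = (L : ℤ) + 1 := by rw [hL]; push_cast; ring
  -- product over C of (t - s) is A s
  have hCprod : ∀ s : ℤ, (∏ t ∈ C, (t - s)) = A s := by
    intro s
    have : C = Finset.Icc ((L : ℤ) + 1) (((L : ℤ) + 1) + (c - l : ℕ) - 1) := by
      rw [hC]; congr 1; push_cast; omega
    rw [this, prod_Icc_above]
  -- product over B of (s - t) is P s
  have hBprod : ∀ s : ℤ, (∏ t ∈ B, (s - t)) = P s := by
    intro s
    have : B = Finset.Icc (1 - ((l - b : ℕ) : ℤ)) 0 := by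
      rw [hB]; congr 1; push_cast; omega
    rw [this, prod_Icc_below]
  -- decomposition lemmas
  have hSC : ∀ S : Finset ℤ, S ⊆ Finset.Icc (1 : ℤ) L →
      Dset (S ∪ C) = Dset S * Dset C * ∏ s ∈ S, A s := by
    intro S hS
    rw [Dset_union_of_lt]
    · congr 1
      exact Finset.prod_congr rfl fun s _ => hCprod s
    · intro s hs t ht
      have h1 := (Finset.mem_Icc.1 (hS hs)).2
      rw [hC] at ht
      have h2 := (Finset.mem_Icc.1 ht).1
      omega
  have hBS : ∀ S : Finset ℤ, S ⊆ Finset.Icc (1 : ℤ) L →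
      Dset (B ∪ S) = Dset B * Dset S * ∏ s ∈ S, P s := by
    intro S hS
    rw [Dset_union_of_lt]
    · congr 1
      rw [Finset.prod_comm]
      exact Finset.prod_congr rfl fun s _ => hBprod s
    · intro t ht s hs
      have h1 := (Finset.mem_Icc.1 (hS hs)).1
      rw [hB] at ht
      have h2 := (Finset.mem_Icc.1 ht).2
      omega
  rw [Finset.sum_mul, Finset.sum_mul]
  apply Finset.sum_congr rfl
  intro Z hZ
  rw [Finset.mem_powersetCard] at hZ
  obtain ⟨hZsub, -⟩ := hZ
  have hZL : Z ⊆ Finset.Icc (1 : ℤ) L := fun z hz => (Finset.mem_sdiff.1 (hZsub hz)).1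
  have hZX : Disjoint X Z := by
    rw [Finset.disjoint_right]
    intro z hz hzX
    exact (Finset.mem_sdiff.1 (hZsub hz)).2 (Finset.mem_union_left _ hzX)
  have hZY : Disjoint Y Z := by
    rw [Finset.disjoint_right]
    intro z hz hzY
    exact (Finset.mem_sdiff.1 (hZsub hz)).2 (Finset.mem_union_right _ hzY)
  have hXZ : X ∪ Z ⊆ Finset.Icc (1 : ℤ) L := Finset.union_subset hX hZL
  have hYZ : Y ∪ Z ⊆ Finset.Icc (1 : ℤ) L := Finset.union_subset hY hZL
  have e1 : Dset (X ∪ Z ∪ C) = Dset (X ∪ Z) * Dset C * ((∏ s ∈ X, A s) * ∏ s ∈ Z, A s) := by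
    rw [hSC (X ∪ Z) hXZ, Finset.prod_union hZX]
  have e2 : Dset (B ∪ Y ∪ Z) = Dset B * Dset (Y ∪ Z) * ((∏ s ∈ Y, P s) * ∏ s ∈ Z, P s) := by
    rw [Finset.union_assoc, hBS (Y ∪ Z) hYZ, Finset.prod_union hZY]
  have e3 : Dset (B ∪ X ∪ Z) = Dset B * Dset (X ∪ Z) * ((∏ s ∈ X, P s) * ∏ s ∈ Z, P s) := by
    rw [Finset.union_assoc, hBS (X ∪ Z) hXZ, Finset.prod_union hZX]
  have e4 : Dset (Y ∪ Z ∪ C) = Dset (Y ∪ Z) * Dset C * ((∏ s ∈ Y, A s) * ∏ s ∈ Z, A s) := by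
    rw [hSC (Y ∪ Z) hYZ, Finset.prod_union hZY]
  have hPX : (∏ x ∈ X, poch x (l - b)) = ∏ x ∈ X, P x := rfl
  have hPY : (∏ y ∈ Y, poch y (l - b)) = ∏ y ∈ Y, P y := rfl
  have hAX : (∏ x ∈ X, poch ((a : ℤ) + b + k + 1 - x) (c - l)) = ∏ x ∈ X, A x := by
    apply Finset.prod_congr rfl
    intro x _
    rw [hAdef]
    congr 1
    rw [hLcast]
  have hAY : (∏ y ∈ Y, poch ((a : ℤ) + b + k + 1 - y) (c - l)) = ∏ y ∈ Y, A y := by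
    apply Finset.prod_congr rfl
    intro y _
    rw [hAdef]
    congr 1
    rw [hLcast]
  rw [e1, e2, e3, e4, hPX, hPY, hAX, hAY]
  ring
end

section
/- Let N be an integer and let Z, X¹, Y¹ be finite sets of integers such that Z = {N+1−z : z ∈ Z}. Set X² = {N+1−x : x ∈ X¹} and Y² = {N+1−y : y ∈ Y¹}, and assume X¹∩X² = ∅, Y¹∩Y² = ∅ and X¹∪X² = Y¹∪Y². Then Δ(Z, X¹) = Δ(Z, Y¹). -/
lemma Dpair_nonneg (S T : Finset ℤ) : 0 ≤ Dpair S T :=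
  Finset.prod_nonneg fun _ _ => Finset.prod_nonneg fun _ _ => abs_nonneg _

lemma inj_refl (N : ℤ) : Function.Injective (fun z : ℤ => N + 1 - z) := by
  intro a b h; simp only at h; omega

lemma Dpair_inner (N : ℤ) (Z T : Finset ℤ)
    (hZ : Z = Z.image (fun z => N + 1 - z)) :
    Dpair Z (T.image (fun x => N + 1 - x)) = Dpair Z T := by
  unfold Dpair
  rw [Finset.prod_comm]
  conv_rhs => rw [Finset.prod_comm]
  rw [Finset.prod_image (fun a _ b _ h => inj_refl N h)]
  apply Finset.prod_congr rfl
  intro x _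
  conv_lhs => rw [hZ]
  rw [Finset.prod_image (fun a _ b _ h => inj_refl N h)]
  apply Finset.prod_congr rfl
  intro z _
  rw [show (N + 1 - x) - (N + 1 - z) = z - x by ring, abs_sub_comm]

theorem Dpair_symmetric_halves (N : ℤ) (Z X1 Y1 : Finset ℤ)
    (hZ : Z = Z.image (fun z => N + 1 - z))
    (X2 Y2 : Finset ℤ)
    (hX2 : X2 = X1.image (fun x => N + 1 - x))
    (hY2 : Y2 = Y1.image (fun y => N + 1 - y))
    (hX12 : Disjoint X1 X2) (hY12 : Disjoint Y1 Y2)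
    (hXY : X1 ∪ X2 = Y1 ∪ Y2) :
    Dpair Z X1 = Dpair Z Y1 := by
  have hUnion : ∀ (A B : Finset ℤ), Disjoint A B →
      Dpair Z (A ∪ B) = Dpair Z A * Dpair Z B := by
    intro A B hAB
    unfold Dpair
    rw [← Finset.prod_mul_distrib]
    exact Finset.prod_congr rfl fun z _ => Finset.prod_union hAB
  have hX2' : Dpair Z X2 = Dpair Z X1 := by rw [hX2]; exact Dpair_inner N Z X1 hZ
  have hY2' : Dpair Z Y2 = Dpair Z Y1 := by rw [hY2]; exact Dpair_inner N Z Y1 hZ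
  have hsq : Dpair Z X1 * Dpair Z X1 = Dpair Z Y1 * Dpair Z Y1 := by
    rw [← hX2', ← hY2']
    calc Dpair Z X2 * Dpair Z X2 = Dpair Z X1 * Dpair Z X2 := by rw [hX2']
    _ = Dpair Z (X1 ∪ X2) := (hUnion _ _ hX12).symm
    _ = Dpair Z (Y1 ∪ Y2) := by rw [hXY]
    _ = Dpair Z Y1 * Dpair Z Y2 := hUnion _ _ hY12
    _ = Dpair Z Y2 * Dpair Z Y2 := by rw [hY2']
  have h1 := Dpair_nonneg Z X1
  have h2 := Dpair_nonneg Z Y1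
  nlinarith [hsq]
end

section
/- Let n be a positive integer and let s₁ < s₂ < ... < s_n be integers, S = {s₁,...,s_n}. Then the number of triangular arrays of integers (a_{i,j})_{1 ≤ j ≤ i ≤ n} satisfying a_{n,j} = s_j for all 1 ≤ j ≤ n, and a_{i+1,j} ≤ a_{i,j} < a_{i+1,j+1} for all 1 ≤ j ≤ i ≤ n−1, equals Δ(S)/H(n); equivalently, H(n) times this number equals Δ(S). -/
/-- The hyperfactorial `H(n) = 0! · 1! ··· (n-1)!`. -/
def hyperfac (n : ℕ) : ℕ :=
  ∏ i ∈ Finset.range n, Nat.factorial i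

/-!
Deleting the bottom row `s` of a pattern leaves a pattern whose bottom row `t` interlaces `s`,
so the number `N(s)` of patterns satisfies `N(s) = ∑ N(t)` over the rows `t` interlacing `s`.
By induction it therefore suffices to show `m! · ∑_t V(t) = V(s)` for the Vandermonde
product `V`. Write `V(t) = det [(tᵢ)₍ⱼ₎]` with falling factorials `x₍ⱼ₎`; multilinearity moves
the sum over `t` into the rows, the discrete antiderivative
`(k + 1) ∑_{a ≤ x < b} x₍ₖ₎ = b₍ₖ₊₁₎ - a₍ₖ₊₁₎` evaluates each entry, and the resulting matrix
is what subtracting consecutive rows does to `[(sᵢ)₍ⱼ₎]`.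
-/

open Finset Matrix Polynomial Nat

section CommRing

variable {R : Type*} [CommRing R]

theorem Matrix.sum_piFinset_det_eq_det_sum {n α : Type*} [Fintype n] [DecidableEq n]
    (A : n → Finset α) (f : n → α → n → R) :
    ∑ t ∈ Fintype.piFinset A, (of fun i => f i (t i)).det =
      (of fun i j => ∑ x ∈ A i, f i x j).det := by
  have h := (detRowAlternating : (n → R) [⋀^n]→ₗ[R] R).map_sum_finset f A
  simp only [Finset.sum_fn] at h
  exact h.symm

theorem Matrix.det_eq_det_succ_sub_castSucc {m : ℕ} (A : Matrix (Fin (m + 1)) (Fin (m + 1)) R)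
    (hA : ∀ i, A i 0 = 1) :
    A.det = (of fun i j : Fin m => A i.succ j.succ - A i.castSucc j.succ).det := by
  let B : Matrix (Fin (m + 1)) (Fin (m + 1)) R :=
    of (Fin.cases (A 0) fun i => A i.succ - A i.castSucc)
  have hAB : A.det = B.det :=
    det_eq_of_forall_row_eq_smul_add_pred 1 (fun _ => rfl) fun i j => by simp [B]
  rw [hAB, det_succ_column_zero, Fin.sum_univ_succ]
  simp [B, hA, submatrix]

theorem det_descPochhammer_eval_eq_det_vandermonde [IsDomain R] {m : ℕ} (v : Fin m → R) :
    (of fun i j : Fin m => (descPochhammer R j).eval (v i)).det = (vandermonde v).det :=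
  (det_eval_matrixOfPolynomials_eq_det_vandermonde v _ (fun _ => descPochhammer_natDegree _ _)
    fun _ => monic_descPochhammer _ _).symm

theorem descPochhammer_eval_add_one_sub (k : ℕ) (x : R) :
    (descPochhammer R (k + 1)).eval (x + 1) - (descPochhammer R (k + 1)).eval x =
      (k + 1) * (descPochhammer R k).eval x := by
  nth_rw 1 [descPochhammer_succ_left]
  simp only [eval_mul, eval_X, eval_comp, eval_sub, eval_one, add_sub_cancel_right,
    descPochhammer_succ_eval]
  ring

end CommRing

theorem mul_sum_Ico_descPochhammer_eval (k : ℕ) {a b : ℤ} (hab : a ≤ b) :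
    (k + 1) * ∑ x ∈ Ico a b, (descPochhammer ℤ k).eval x =
      (descPochhammer ℤ (k + 1)).eval b - (descPochhammer ℤ (k + 1)).eval a := by
  induction b, hab using Int.leInduction with
  | base => simp
  | succ b hab ih =>
    rw [← sum_Ico_add_eq_sum_Ico_add_one hab, mul_add, ih, ← descPochhammer_eval_add_one_sub]
    ring

def Interlaces {m : ℕ} (s : Fin (m + 1) → ℤ) (t : Fin m → ℤ) : Prop :=
  ∀ j, s j.castSucc ≤ t j ∧ t j < s j.succ

theorem Interlaces.strictMono {m : ℕ} {s : Fin (m + 2) → ℤ} {t : Fin (m + 1) → ℤ}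
    (h : Interlaces s t) : StrictMono t :=
  Fin.strictMono_iff_lt_succ.mpr fun j => (h j.castSucc).2.trans_le (h j.succ).1

noncomputable def interlacingRows {m : ℕ} (s : Fin (m + 1) → ℤ) : Finset (Fin m → ℤ) :=
  Fintype.piFinset fun j => Ico (s j.castSucc) (s j.succ)

theorem mem_interlacingRows {m : ℕ} {s : Fin (m + 1) → ℤ} {t : Fin m → ℤ} :
    t ∈ interlacingRows s ↔ Interlaces s t := by
  simp [interlacingRows, Interlaces]

theorem factorial_mul_sum_det_vandermonde_interlacingRows {m : ℕ} {s : Fin (m + 1) → ℤ}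
    (hs : Monotone s) :
    m ! * ∑ t ∈ interlacingRows s, (vandermonde t).det = (vandermonde s).det := by
  have hfac : ∏ j : Fin m, ((j : ℤ) + 1) = m ! := by
    simp [Fin.prod_univ_eq_prod_range (fun j => (j : ℤ) + 1), ← prod_range_add_one_eq_factorial]
  simp_rw [interlacingRows, ← det_descPochhammer_eval_eq_det_vandermonde]
  rw [sum_piFinset_det_eq_det_sum _ fun (_ : Fin m) x (j : Fin m) => (descPochhammer ℤ j).eval x,
    ← hfac, ← det_mul_row, det_eq_det_succ_sub_castSucc _ (by simp)]
  congr with i j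
  exact mul_sum_Ico_descPochhammer_eval j (hs i.castSucc_le_succ)

def gtPatterns (m : ℕ) (s : Fin (m + 1) → ℤ) : Set ((i : Fin (m + 1)) → Fin (i.1 + 1) → ℤ) :=
  {a | a (Fin.last m) = s ∧ ∀ r : Fin m, Interlaces (a r.succ) (a r.castSucc)}

theorem mem_gtPatterns_succ {m : ℕ} {s : Fin (m + 2) → ℤ}
    {a : (i : Fin (m + 2)) → Fin (i.1 + 1) → ℤ} :
    a ∈ gtPatterns (m + 1) s ↔ a (Fin.last (m + 1)) = s ∧
      Interlaces s (a (Fin.last m).castSucc) ∧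
      Fin.init a ∈ gtPatterns m (a (Fin.last m).castSucc) := by
  simp only [gtPatterns, Set.mem_ofPred_eq, Fin.forall_fin_succ' (n := m)]
  constructor
  · rintro ⟨rfl, h, hlast⟩
    exact ⟨rfl, hlast, rfl, h⟩
  · rintro ⟨rfl, hlast, -, h⟩
    exact ⟨rfl, h, hlast⟩

noncomputable def gtPatternsSuccEquiv (m : ℕ) (s : Fin (m + 2) → ℤ) :
    gtPatterns (m + 1) s ≃ Σ t : interlacingRows s, gtPatterns m t where
  toFun a :=
    have ha := mem_gtPatterns_succ.mp a.2
    ⟨⟨a.1 (Fin.last m).castSucc, mem_interlacingRows.mpr ha.2.1⟩, ⟨Fin.init a.1, ha.2.2⟩⟩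
  invFun p := ⟨Fin.snoc (α := fun i : Fin (m + 2) => Fin (i.1 + 1) → ℤ) p.2.1 s, by
    rw [mem_gtPatterns_succ, Fin.snoc_last, Fin.snoc_castSucc, Fin.init_snoc, p.2.2.1]
    exact ⟨rfl, mem_interlacingRows.mp p.1.2, p.2.2⟩⟩
  left_inv := fun ⟨a, ha⟩ => Subtype.ext <| by
    dsimp only
    rw [← (mem_gtPatterns_succ.mp ha).1, Fin.snoc_init_self]
  right_inv p := Sigma.subtype_ext (Subtype.ext <| by simpa using p.2.2.1)
    (Fin.init_snoc (α := fun i : Fin (m + 2) => Fin (i.1 + 1) → ℤ) s p.2.1)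

theorem gtPatterns_zero (s : Fin 1 → ℤ) :
    gtPatterns 0 s = {Fin.snoc (α := fun i : Fin 1 => Fin (i.1 + 1) → ℤ) (fun i => i.elim0) s} := by
  refine Set.eq_singleton_iff_unique_mem.mpr
    ⟨⟨Fin.snoc_last _ _, fun i => i.elim0⟩, fun a ha => ?_⟩
  rw [← ha.1, ← Fin.snoc_init_self a]
  congr
  exact funext fun i => i.elim0

theorem gtPatterns_finite : ∀ (m : ℕ) (s : Fin (m + 1) → ℤ), (gtPatterns m s).Finite
  | 0, s => by simp [gtPatterns_zero]
  | m + 1, s =>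
    have := fun t : interlacingRows s => (gtPatterns_finite m t).to_subtype
    Set.finite_coe_iff.mp (.of_equiv _ (gtPatternsSuccEquiv m s).symm)

theorem ncard_gtPatterns_succ (m : ℕ) (s : Fin (m + 2) → ℤ) :
    (gtPatterns (m + 1) s).ncard = ∑ t ∈ interlacingRows s, (gtPatterns m t).ncard := by
  have := fun t : interlacingRows s => (gtPatterns_finite m t).to_subtype
  rw [← Nat.card_coe_set_eq, Nat.card_congr (gtPatternsSuccEquiv m s), Nat.card_sigma]
  simp only [Nat.card_coe_set_eq]
  exact sum_coe_sort _ fun t => (gtPatterns m t).ncard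

theorem hyperfac_succ (n : ℕ) : hyperfac (n + 1) = hyperfac n * n ! :=
  prod_range_succ _ _

theorem hyperfac_mul_ncard_gtPatterns :
    ∀ (m : ℕ) (s : Fin (m + 1) → ℤ), StrictMono s →
      (hyperfac (m + 1) : ℤ) * (gtPatterns m s).ncard = (vandermonde s).det
  | 0, s, _ => by simp [gtPatterns_zero, hyperfac, vandermonde]
  | m + 1, s, hs =>
    calc (hyperfac (m + 2) : ℤ) * (gtPatterns (m + 1) s).ncard
        = (m + 1)! * ∑ t ∈ interlacingRows s, (hyperfac (m + 1) : ℤ) * (gtPatterns m t).ncard := by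
          rw [ncard_gtPatterns_succ, hyperfac_succ, mul_sum]
          push_cast
          rw [mul_sum]
          exact sum_congr rfl fun _ _ => by ring
      _ = (m + 1)! * ∑ t ∈ interlacingRows s, (vandermonde t).det := by
          congr 1
          refine sum_congr rfl fun t ht => ?_
          exact hyperfac_mul_ncard_gtPatterns m t (mem_interlacingRows.mp ht).strictMono
      _ = (vandermonde s).det := factorial_mul_sum_det_vandermonde_interlacingRows hs.monotone

theorem Dset_image_eq_det_vandermonde {n : ℕ} {s : Fin n → ℤ} (hs : StrictMono s) :
    Dset (image s univ) = (vandermonde s).det := by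
  rw [det_vandermonde, Dset, prod_image hs.injective.injOn]
  refine prod_congr rfl fun i _ => ?_
  rw [filter_image, prod_image hs.injective.injOn]
  congr
  ext j
  simp [hs.lt_iff_lt]

/-- Gelfand–Tsetlin: the number of interlacing triangular arrays with strictly
increasing rows and prescribed bottom row `s₁ < s₂ < ... < sₙ` equals `Δ(S)/H(n)`;
here stated as `H(n)` times the count equals `Δ(S)`.  Row `i` (for `i : Fin n`)
has `i.1 + 1` entries. -/
theorem gelfand_tsetlin_count (n : ℕ) (hn : 0 < n) (s : Fin n → ℤ) (hs : StrictMono s) :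
    (hyperfac n : ℤ) *
      (Set.ncard {a : (i : Fin n) → Fin (i.1 + 1) → ℤ |
        (∀ j : Fin n, a ⟨n - 1, by omega⟩ (Fin.cast (by omega : n = n - 1 + 1) j) = s j) ∧
        (∀ (r : ℕ) (hr : r + 1 < n) (j : Fin (r + 1)),
          a ⟨r + 1, hr⟩ j.castSucc ≤ a ⟨r, by omega⟩ j ∧
          a ⟨r, by omega⟩ j < a ⟨r + 1, hr⟩ j.succ)} : ℤ) =
      Dset (Finset.image s Finset.univ) := by
  obtain ⟨m, rfl⟩ : ∃ m, n = m + 1 := ⟨n - 1, by omega⟩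
  rw [Dset_image_eq_det_vandermonde hs, ← hyperfac_mul_ncard_gtPatterns m s hs]
  congr 3
  ext a
  exact and_congr funext_iff.symm ⟨fun h r => h r (by omega), fun h r hr => h ⟨r, by omega⟩⟩
end
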